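/- arXiv:1504.01278 — 5 statements merged into one kernel-verified Lean document; each statement's English description precedes it below -/
import Mathlib

section
/- Let (C, n) be a finite-dimensional composition algebra over a field k of characteristic not two. Then there exists an element e ∈ C with n(e) = 1 such that H := C_{(R_e)⁻¹, (L_e)⁻¹} is a unital algebra with unit e·e (where L_e, R_e are left and right multiplication by e in C), H with the form n is a composition algebra, and C = H_{f,g} with f = R_e, g = L_e, where f and g are isometries of n. -/
/-!
Since `n` is non-degenerate there is some `c` with `n c ≠ 0`; then `e = n(c)⁻¹ c²` has
`n e = 1`. Multiplicativity of `n` makes `R_e` and `L_e` isometries, and since they scale the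
polar form by `n e = 1`, non-degeneracy makes them injective, hence bijective in finite
dimension. The isotope by their inverses has unit `e·e = R_e e = L_e e`.
-/

open QuadraticMap

theorem QuadraticMap.exists_ne_zero_of_polar_nondegenerate {R M N : Type*} [CommRing R]
    [AddCommGroup M] [Module R M] [AddCommGroup N] [Module R N] [Nontrivial M]
    {Q : QuadraticMap R M N} (hnd : ∀ x : M, (∀ y : M, polar Q x y = 0) → x = 0) :
    ∃ x, Q x ≠ 0 := by
  by_contra! h
  obtain ⟨x, hx⟩ := exists_ne (0 : M)
  exact hx (hnd x fun y => by simp [polar, h])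

section CompositionAlgebra

variable {k C : Type*} [AddCommGroup C]

theorem polar_mul_right [CommRing k] [Module k C] {n : QuadraticForm k C}
    {mul : C →ₗ[k] C →ₗ[k] C} (hcomp : ∀ x y : C, n (mul x y) = n x * n y) (x z y : C) :
    polar n (mul x y) (mul z y) = polar n x z * n y := by
  simp only [polar, ← LinearMap.add_apply, ← map_add, hcomp]
  ring

theorem polar_mul_left [CommRing k] [Module k C] {n : QuadraticForm k C}
    {mul : C →ₗ[k] C →ₗ[k] C} (hcomp : ∀ x y : C, n (mul x y) = n x * n y) (x z y : C) :
    polar n (mul y x) (mul y z) = polar n x z * n y := by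
  simp only [polar, ← map_add, hcomp]
  ring

variable [Field k] [Module k C] {n : QuadraticForm k C} {mul : C →ₗ[k] C →ₗ[k] C}

theorem norm_inv_smul_mul_self (hcomp : ∀ x y : C, n (mul x y) = n x * n y) {c : C}
    (hc : n c ≠ 0) : n ((n c)⁻¹ • mul c c) = 1 := by
  rw [QuadraticMap.map_smul, hcomp, smul_eq_mul]
  field_simp

theorem injective_mul_right_of_ne_zero (hnd : ∀ x : C, (∀ y : C, polar n x y = 0) → x = 0)
    (hcomp : ∀ x y : C, n (mul x y) = n x * n y) {e : C} (he : n e ≠ 0) :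
    Function.Injective (mul.flip e) := by
  rw [injective_iff_map_eq_zero]
  intro x hx
  refine hnd x fun z => ?_
  have h := polar_mul_right hcomp x z e
  rw [show mul x e = 0 from hx, polar_zero_left] at h
  exact (mul_eq_zero.mp h.symm).resolve_right he

theorem injective_mul_left_of_ne_zero (hnd : ∀ x : C, (∀ y : C, polar n x y = 0) → x = 0)
    (hcomp : ∀ x y : C, n (mul x y) = n x * n y) {e : C} (he : n e ≠ 0) :
    Function.Injective (mul e) := by
  rw [injective_iff_map_eq_zero]
  intro x hx
  refine hnd x fun z => ?_
  have h := polar_mul_left hcomp x z e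
  rw [hx, polar_zero_left] at h
  exact (mul_eq_zero.mp h.symm).resolve_right he

end CompositionAlgebra

theorem stmt3_general {k C : Type*} [Field k]
    [AddCommGroup C] [Module k C] [FiniteDimensional k C] [Nontrivial C]
    (n : QuadraticForm k C)
    (hnd : ∀ x : C, (∀ y : C, QuadraticMap.polar n x y = 0) → x = 0)
    (mul : C →ₗ[k] C →ₗ[k] C)
    (hcomp : ∀ x y : C, n (mul x y) = n x * n y) :
    ∃ (e : C) (f g : C ≃ₗ[k] C),
      n e = 1 ∧
      (∀ x : C, f x = mul x e) ∧ (∀ x : C, g x = mul e x) ∧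
      -- H := C_{f⁻¹,g⁻¹} is unital with unit e·e
      (∀ x : C, mul (f.symm x) (g.symm (mul e e)) = x) ∧
      (∀ x : C, mul (f.symm (mul e e)) (g.symm x) = x) ∧
      -- (H, n) is a composition algebra
      (∀ x y : C, n (mul (f.symm x) (g.symm y)) = n x * n y) ∧
      -- f and g are isometries of n
      (∀ x : C, n (f x) = n x) ∧ (∀ x : C, n (g x) = n x) ∧
      -- C = H_{f,g}
      (∀ x y : C, mul x y = mul (f.symm (f x)) (g.symm (g y))) := by
  obtain ⟨c, hc⟩ := exists_ne_zero_of_polar_nondegenerate hnd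
  set e := (n c)⁻¹ • mul c c
  have hne : n e = 1 := norm_inv_smul_mul_self hcomp hc
  have he : n e ≠ 0 := hne ▸ one_ne_zero
  let f := LinearEquiv.ofInjectiveEndo _ (injective_mul_right_of_ne_zero hnd hcomp he)
  let g := LinearEquiv.ofInjectiveEndo _ (injective_mul_left_of_ne_zero hnd hcomp he)
  have hf : ∀ x, f x = mul x e := fun _ => rfl
  have hg : ∀ x, g x = mul e x := fun _ => rfl
  have hfiso : ∀ x, n (f x) = n x := fun x => by rw [hf, hcomp, hne, mul_one]
  have hgiso : ∀ x, n (g x) = n x := fun x => by rw [hg, hcomp, hne, one_mul]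
  have hfee : f.symm (mul e e) = e := f.symm_apply_eq.mpr rfl
  have hgee : g.symm (mul e e) = e := g.symm_apply_eq.mpr rfl
  refine ⟨e, f, g, hne, hf, hg, fun x => ?_, fun x => ?_, fun x y => ?_, hfiso, hgiso,
    fun x y => by rw [f.symm_apply_apply, g.symm_apply_apply]⟩
  · rw [hgee, ← hf, f.apply_symm_apply]
  · rw [hfee, ← hg, g.apply_symm_apply]
  · rw [hcomp, ← hfiso (f.symm x), ← hgiso (g.symm y), f.apply_symm_apply, g.apply_symm_apply]

/-- Kaplansky's trick: every finite-dimensional composition algebra `(C, n)`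
has an element `e` with `n e = 1` such that with `f = R_e`, `g = L_e` (which
are isometries of `n`), the isotope `H = C_{f⁻¹, g⁻¹}` is a unital composition
algebra with unit `e·e`, and `C = H_{f,g}`. -/
theorem stmt3 {k C : Type*} [Field k] (hchar : (2 : k) ≠ 0)
    [AddCommGroup C] [Module k C] [FiniteDimensional k C] [Nontrivial C]
    (n : QuadraticForm k C)
    (hnd : ∀ x : C, (∀ y : C, QuadraticMap.polar n x y = 0) → x = 0)
    (mul : C →ₗ[k] C →ₗ[k] C)
    (hcomp : ∀ x y : C, n (mul x y) = n x * n y) :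
    ∃ (e : C) (f g : C ≃ₗ[k] C),
      n e = 1 ∧
      (∀ x : C, f x = mul x e) ∧ (∀ x : C, g x = mul e x) ∧
      -- H := C_{f⁻¹,g⁻¹} is unital with unit e·e
      (∀ x : C, mul (f.symm x) (g.symm (mul e e)) = x) ∧
      (∀ x : C, mul (f.symm (mul e e)) (g.symm x) = x) ∧
      -- (H, n) is a composition algebra
      (∀ x y : C, n (mul (f.symm x) (g.symm y)) = n x * n y) ∧
      -- f and g are isometries of n
      (∀ x : C, n (f x) = n x) ∧ (∀ x : C, n (g x) = n x) ∧
      -- C = H_{f,g}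
      (∀ x y : C, mul x y = mul (f.symm (f x)) (g.symm (g y))) :=
  stmt3_general n hnd mul hcomp
end

section
/- Let (C, n) be a finite-dimensional composition algebra over a field k of characteristic not two. Then there exist a symmetric composition algebra (S, n) on the same quadratic space and isometries f, g ∈ O(n) such that C equals the isotope S_{f,g}, i.e., the multiplication of C is given by x·y = f(x)g(y) where juxtaposition is the multiplication of S. -/
private lemma stmt9_bij {k C : Type*} [Field k]
    [AddCommGroup C] [Module k C] [FiniteDimensional k C]
    (n : QuadraticForm k C)
    (hnd : ∀ x : C, (∀ y : C, QuadraticMap.polar n x y = 0) → x = 0)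
    (f : C →ₗ[k] C) (hf : ∀ x, n (f x) = n x) : Function.Bijective f := by
  have hinj : Function.Injective f := by
    rw [← LinearMap.ker_eq_bot, LinearMap.ker_eq_bot']
    intro m hm
    apply hnd
    intro y
    have hp : QuadraticMap.polar n (f m) (f y) = QuadraticMap.polar n m y := by
      simp only [QuadraticMap.polar, ← map_add, hf]
    rw [← hp, hm, QuadraticMap.polar_zero_left]
  exact ⟨hinj, (LinearMap.injective_iff_surjective).mp hinj⟩

/-- Every finite-dimensional composition algebra `(C, n)` is an orthogonal
isotope of a symmetric composition algebra: there exist a symmetric composition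
algebra structure `mulS` on the same quadratic space and isometries `f, g` of
`n` such that `x ·_C y = mulS (f x) (g y)`. -/
theorem stmt9 {k C : Type*} [Field k] (hchar : (2 : k) ≠ 0)
    [AddCommGroup C] [Module k C] [FiniteDimensional k C] [Nontrivial C]
    (n : QuadraticForm k C)
    (hnd : ∀ x : C, (∀ y : C, QuadraticMap.polar n x y = 0) → x = 0)
    (mul : C →ₗ[k] C →ₗ[k] C)
    (hcomp : ∀ x y : C, n (mul x y) = n x * n y) :
    ∃ (mulS : C →ₗ[k] C →ₗ[k] C) (f g : C ≃ₗ[k] C),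
      (∀ x y : C, n (mulS x y) = n x * n y) ∧
      (∀ x y z : C,
        QuadraticMap.polar n (mulS x y) z = QuadraticMap.polar n x (mulS y z)) ∧
      (∀ x : C, n (f x) = n x) ∧ (∀ x : C, n (g x) = n x) ∧
      (∀ x y : C, mul x y = mulS (f x) (g y)) := by
  classical
  -- there is an element of nonzero norm
  obtain ⟨a, ha⟩ : ∃ a : C, n a ≠ 0 := by
    by_contra h
    push_neg at h
    obtain ⟨x, hx⟩ := exists_ne (0 : C)
    exact hx (hnd x fun y => by simp [QuadraticMap.polar, h])
  set u : C := (n a)⁻¹ • mul a a with hu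
  have hnu : n u = 1 := by
    rw [hu, QuadraticMap.map_smul, hcomp, smul_eq_mul]
    field_simp
  set L : C →ₗ[k] C := mul u with hLdef
  set R : C →ₗ[k] C := mul.flip u with hRdef
  have hLiso : ∀ x, n (L x) = n x := fun x => by
    simp [hLdef, hcomp, hnu]
  have hRiso : ∀ x, n (R x) = n x := fun x => by
    simp [hRdef, hcomp, hnu]
  set L' := LinearEquiv.ofBijective L (stmt9_bij n hnd L hLiso) with hL'
  set R' := LinearEquiv.ofBijective R (stmt9_bij n hnd R hRiso) with hR'
  have hL'app : ∀ x, L' x = mul u x := fun x => rfl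
  have hR'app : ∀ x, R' x = mul x u := fun x => rfl
  -- the Hurwitz (unital) multiplication
  set mulH : C →ₗ[k] C →ₗ[k] C :=
    mul.compl₁₂ R'.symm.toLinearMap L'.symm.toLinearMap with hmulHdef
  have hmulH : ∀ x y, mulH x y = mul (R'.symm x) (L'.symm y) := fun x y => rfl
  have hsymmR : ∀ x, n (R'.symm x) = n x := by
    intro x
    conv_rhs => rw [← R'.apply_symm_apply x]
    exact (hRiso _).symm
  have hsymmL : ∀ x, n (L'.symm x) = n x := by
    intro x
    conv_rhs => rw [← L'.apply_symm_apply x]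
    exact (hLiso _).symm
  have hcompH : ∀ x y, n (mulH x y) = n x * n y := by
    intro x y
    rw [hmulH, hcomp, hsymmR, hsymmL]
  set e : C := mul u u with he
  have heL : ∀ y, mulH e y = y := by
    intro y
    rw [hmulH]
    have h1 : R'.symm e = u := by
      rw [LinearEquiv.symm_apply_eq]; rfl
    rw [h1]
    exact L'.apply_symm_apply y
  have heR : ∀ y, mulH y e = y := by
    intro y
    rw [hmulH]
    have h1 : L'.symm e = u := by
      rw [LinearEquiv.symm_apply_eq]; rfl
    rw [h1]
    exact R'.apply_symm_apply y
  have hne : n e = 1 := by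
    rw [he, hcomp, hnu, one_mul]
  -- linearized composition identities
  have hB1 : ∀ x y z, QuadraticMap.polar n (mulH x y) (mulH x z)
      = n x * QuadraticMap.polar n y z := by
    intro x y z
    have h := hcompH x (y + z)
    rw [map_add] at h
    simp only [QuadraticMap.polar]
    linear_combination h - hcompH x y - hcompH x z
  have hB2 : ∀ x y z, QuadraticMap.polar n (mulH x z) (mulH y z)
      = QuadraticMap.polar n x y * n z := by
    intro x y z
    have h := hcompH (x + y) z
    simp only [map_add, LinearMap.add_apply] at h
    simp only [QuadraticMap.polar]
    linear_combination h - hcompH x z - hcompH y z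
  have hB3 : ∀ x w y z, QuadraticMap.polar n (mulH x y) (mulH w z)
      + QuadraticMap.polar n (mulH w y) (mulH x z)
      = QuadraticMap.polar n x w * QuadraticMap.polar n y z := by
    intro x w y z
    have h := hB1 (x + w) y z
    have hxw : n (x + w) = n x + n w + QuadraticMap.polar n x w := by
      simp only [QuadraticMap.polar]; ring
    simp only [map_add, LinearMap.add_apply, QuadraticMap.polar_add_left,
      QuadraticMap.polar_add_right, hxw] at h
    linear_combination h - hB1 x y z - hB1 w y z
  have hB4 : ∀ a b c d, QuadraticMap.polar n (mulH a c) (mulH b d)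
      + QuadraticMap.polar n (mulH a d) (mulH b c)
      = QuadraticMap.polar n a b * QuadraticMap.polar n c d := by
    intro a b c d
    have h := hB2 a b (c + d)
    have hcd : n (c + d) = n c + n d + QuadraticMap.polar n c d := by
      simp only [QuadraticMap.polar]; ring
    simp only [map_add, QuadraticMap.polar_add_left,
      QuadraticMap.polar_add_right, hcd] at h
    linear_combination h - hB2 a b c - hB2 a b d
  have hK1 : ∀ x y z, QuadraticMap.polar n (mulH x y) z
      + QuadraticMap.polar n y (mulH x z)
      = QuadraticMap.polar n x e * QuadraticMap.polar n y z := by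
    intro x y z
    have h := hB3 x e y z
    rwa [heL, heL] at h
  have hK2 : ∀ x y z, QuadraticMap.polar n (mulH x y) z
      + QuadraticMap.polar n x (mulH z y)
      = QuadraticMap.polar n x z * QuadraticMap.polar n y e := by
    intro x y z
    have h := hB4 x z y e
    rwa [heR, heR] at h
  -- the conjugation
  set conjL : C →ₗ[k] C :=
    (LinearMap.toSpanSingleton k C e).comp (n.polarBilin.flip e) - LinearMap.id
    with hconjdef
  have hconj : ∀ x, conjL x = QuadraticMap.polar n x e • e - x := fun x => rfl
  have hBee : QuadraticMap.polar n e e = 2 := by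
    rw [QuadraticMap.polar_self, hne]
    norm_num
  have hconjE : ∀ x, QuadraticMap.polar n (conjL x) e = QuadraticMap.polar n x e := by
    intro x
    rw [hconj, QuadraticMap.polar_sub_left, QuadraticMap.polar_smul_left,
      hBee, smul_eq_mul]
    ring
  have hinv : Function.Involutive conjL := by
    intro x
    rw [hconj (conjL x), hconjE, hconj]
    abel
  have hnconj : ∀ x, n (conjL x) = n x := by
    intro x
    have h1 : QuadraticMap.polar n (QuadraticMap.polar n x e • e) (-x)
        = n (QuadraticMap.polar n x e • e + -x)
          - n (QuadraticMap.polar n x e • e) - n (-x) := rfl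
    have h2 : QuadraticMap.polar n (QuadraticMap.polar n x e • e) (-x)
        = -(QuadraticMap.polar n x e * QuadraticMap.polar n x e) := by
      rw [QuadraticMap.polar_neg_right, QuadraticMap.polar_smul_left,
        QuadraticMap.polar_comm n e x, smul_eq_mul]
    have h3 : n (QuadraticMap.polar n x e • e)
        = QuadraticMap.polar n x e * QuadraticMap.polar n x e := by
      rw [QuadraticMap.map_smul, hne, smul_eq_mul, mul_one]
    have h4 : n (-x) = n x := QuadraticMap.map_neg n x
    rw [hconj, sub_eq_add_neg]
    linear_combination -h1 + h2 + h3 + h4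
  -- key adjointness identities
  have hP : ∀ x y z, QuadraticMap.polar n y (mulH (conjL x) z)
      = QuadraticMap.polar n (mulH x y) z := by
    intro x y z
    have hc : mulH (conjL x) z = QuadraticMap.polar n x e • z - mulH x z := by
      rw [hconj, map_sub, LinearMap.sub_apply, map_smul, LinearMap.smul_apply, heL]
    rw [hc, QuadraticMap.polar_sub_right, QuadraticMap.polar_smul_right, smul_eq_mul]
    linear_combination -(hK1 x y z)
  have hQ : ∀ x y z, QuadraticMap.polar n x (mulH z (conjL y))
      = QuadraticMap.polar n (mulH x y) z := by
    intro x y z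
    have hc : mulH z (conjL y) = QuadraticMap.polar n y e • z - mulH z y := by
      rw [hconj, map_sub, map_smul, heR]
    rw [hc, QuadraticMap.polar_sub_right, QuadraticMap.polar_smul_right, smul_eq_mul]
    linear_combination -(hK2 x y z)
  -- the symmetric multiplication
  set mulS : C →ₗ[k] C →ₗ[k] C := mulH.compl₁₂ conjL conjL with hmulSdef
  have hmulS : ∀ x y, mulS x y = mulH (conjL x) (conjL y) := fun x y => rfl
  set conjE : C ≃ₗ[k] C := LinearEquiv.ofInvolutive conjL hinv with hconjEdef
  have hconjEapp : ∀ x, conjE x = conjL x := fun x => rfl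
  refine ⟨mulS, R'.trans conjE, L'.trans conjE, ?_, ?_, ?_, ?_, ?_⟩
  · intro x y
    rw [hmulS, hcompH, hnconj, hnconj]
  · intro x y z
    have h1 : QuadraticMap.polar n (mulS x y) z
        = QuadraticMap.polar n (conjL y) (mulH x z) := by
      rw [hmulS]
      have := hP (conjL x) (conjL y) z
      rw [hinv x] at this
      exact this.symm
    have h2 : QuadraticMap.polar n x (mulS y z)
        = QuadraticMap.polar n (mulH x z) (conjL y) := by
      rw [hmulS]
      exact hQ x z (conjL y)
    rw [h1, h2, QuadraticMap.polar_comm]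
  · intro x
    rw [LinearEquiv.trans_apply, hconjEapp, hnconj]
    exact hRiso x
  · intro x
    rw [LinearEquiv.trans_apply, hconjEapp, hnconj]
    exact hLiso x
  · intro x y
    rw [LinearEquiv.trans_apply, LinearEquiv.trans_apply, hconjEapp, hconjEapp,
      hmulS, hinv, hinv, hmulH, LinearEquiv.symm_apply_apply, LinearEquiv.symm_apply_apply]
end

section
/- Let n be a 3-fold Pfister form over k, C and D eight-dimensional composition algebras with form n, and h : C → D an algebra isomorphism. Then h ∈ O(n), and for each j ∈ GO⁺(n) with triality components (j₁, j₂) with respect to D, the pair (h⁻¹j₁h, h⁻¹j₂h) is a pair of triality components of h⁻¹jh with respect to C; consequently ρ_r^C([h⁻¹jh]) = [h⁻¹]ρ_r^D([j])[h] for r = 1, 2. -/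
/-!
Put `N := n ∘ h`: a second nondegenerate form that is multiplicative for the product `μ` of `C`.
Let `T` be the endomorphism with `polar n (T x) y = polar N x y`. Comparing both polar forms on
the image of `μ a` shows `T ∘ μ a = (N a / n a) • μ a ∘ T` for every anisotropic `a`. As
`a ↦ μ a` is injective and `T` bijective, the ratio `N a / n a` agrees on `a` and `b` whenever
`a + b` is anisotropic, and in dimension at least three any two anisotropic vectors are joined by
such steps. So the ratio is a constant `c`; anisotropic vectors span, hence `T ∘ μ a = c • μ a ∘ T`
for all `a`, which gives `N = c • n`, and `N (x₀ x₀) = N x₀ ^ 2` forces `c = 1`. The claim on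
triality components is then a direct computation with `h⁻¹ (x y) = h⁻¹ x · h⁻¹ y`.
-/

open QuadraticMap Module

namespace QuadraticForm

variable {k V : Type*} [Field k] [AddCommGroup V] [Module k V]

section Form

variable (n : QuadraticForm k V)

lemma polar_self_eq_two_mul (a : V) : polar n a a = 2 * n a := by
  rw [polar_self, nsmul_eq_mul, Nat.cast_ofNat]

lemma map_sub_eq_add_sub_polar (a b : V) : n (a - b) = n a + n b - polar n a b := by
  rw [sub_eq_add_neg, QuadraticMap.map_add n, QuadraticMap.map_neg, polar_neg_right]
  ring

variable {n}

lemma polar_eq_zero_and_add_eq_zero (hchar : (2 : k) ≠ 0) {a b : V}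
    (hadd : n (a + b) = 0) (hsub : n (a - b) = 0) : polar n a b = 0 ∧ n a + n b = 0 := by
  rw [QuadraticMap.map_add n] at hadd
  rw [map_sub_eq_add_sub_polar] at hsub
  constructor
  · have : 2 * polar n a b = 0 := by linear_combination hadd - hsub
    exact (mul_eq_zero.mp this).resolve_left hchar
  · have : 2 * (n a + n b) = 0 := by linear_combination hadd + hsub
    exact (mul_eq_zero.mp this).resolve_left hchar

lemma exists_anisotropic_orthogonal [FiniteDimensional k V] (hchar : (2 : k) ≠ 0)
    (hn : (polarBilin n).SeparatingLeft) (hdim : 2 < finrank k V) {a b : V}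
    (ha : n a ≠ 0) (hb : n b ≠ 0) (hab : polar n a b = 0) :
    ∃ d, polar n a d = 0 ∧ polar n b d = 0 ∧ n d ≠ 0 := by
  -- otherwise `n`, hence its polar form, vanishes on `{a, b}ᗮ`, which then lies in the radical
  by_contra! hiso
  have haa : polar n a a ≠ 0 := by rw [polar_self_eq_two_mul]; exact mul_ne_zero hchar ha
  have hbb : polar n b b ≠ 0 := by rw [polar_self_eq_two_mul]; exact mul_ne_zero hchar hb
  set coef : V → Fin 2 → k := fun v => ![polar n a v / polar n a a, polar n b v / polar n b b]
  set pr : V → V := fun v => v - ∑ i, coef v i • ![a, b] i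
  have hpr_a : ∀ v, polar n a (pr v) = 0 := fun v => by
    simp only [pr, coef, Fin.sum_univ_two, polar_sub_right, polar_add_right, polar_smul_right,
      Matrix.cons_val_zero, Matrix.cons_val_one, hab, smul_eq_mul]
    field_simp
    ring
  have hpr_b : ∀ v, polar n b (pr v) = 0 := fun v => by
    simp only [pr, coef, Fin.sum_univ_two, polar_sub_right, polar_add_right, polar_smul_right,
      Matrix.cons_val_zero, Matrix.cons_val_one, polar_comm n b a, hab, smul_eq_mul]
    field_simp
    ring
  have hpr_pr : ∀ v w, polar n (pr v) (pr w) = 0 := fun v w => by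
    have hsum := hiso (pr v + pr w) (by rw [polar_add_right, hpr_a, hpr_a, add_zero])
      (by rw [polar_add_right, hpr_b, hpr_b, add_zero])
    rw [polar, hsum, hiso _ (hpr_a v) (hpr_b v), hiso _ (hpr_a w) (hpr_b w), sub_zero, sub_zero]
  have hpr_zero : ∀ v, pr v = 0 := fun v => hn _ fun w => by
    have hw : w = pr w + (coef w 0 • a + coef w 1 • b) := by simp [pr]
    rw [polarBilin_apply_apply, hw, polar_add_right, hpr_pr, polar_add_right, polar_smul_right,
      polar_smul_right, polar_comm, hpr_a, polar_comm, hpr_b]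
    simp
  have hspan : Submodule.span k (Set.range ![a, b]) = ⊤ := by
    refine eq_top_iff.mpr fun v _ => (Submodule.mem_span_range_iff_exists_fun k).mpr ⟨coef v, ?_⟩
    exact (sub_eq_zero.mp (hpr_zero v)).symm
  have := finrank_le_of_span_eq_top hspan
  simp only [Fintype.card_fin] at this
  omega

lemma exists_anisotropic [Nontrivial V] (hn : (polarBilin n).SeparatingLeft) : ∃ x, n x ≠ 0 := by
  obtain ⟨x, hx⟩ := exists_ne (0 : V)
  by_contra! hiso
  exact hx (hn x fun y => by simp [polar, hiso])

lemma apply_eq_apply_of_anisotropic [FiniteDimensional k V] (hchar : (2 : k) ≠ 0)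
    (hn : (polarBilin n).SeparatingLeft) (hdim : 2 < finrank k V) {f : V → k}
    (hf_neg : ∀ a, f (-a) = f a)
    (hf_add : ∀ a b, n a ≠ 0 → n b ≠ 0 → n (a + b) ≠ 0 → f a = f b)
    {a b : V} (ha : n a ≠ 0) (hb : n b ≠ 0) : f a = f b := by
  have linked : ∀ a b, n a ≠ 0 → n b ≠ 0 → ¬(polar n a b = 0 ∧ n a + n b = 0) → f a = f b := by
    intro a b ha hb hlinked
    by_cases hadd : n (a + b) = 0
    · have hsub : n (a + -b) ≠ 0 := fun hsub =>
        hlinked (polar_eq_zero_and_add_eq_zero hchar hadd (by rwa [sub_eq_add_neg]))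
      rw [hf_add a (-b) ha (by rwa [QuadraticMap.map_neg]) hsub, hf_neg]
    · exact hf_add a b ha hb hadd
  by_cases hhyp : polar n a b = 0 ∧ n a + n b = 0
  · -- `a` and `b` span a hyperbolic plane: link both to `a + b + d` for an anisotropic `d ⊥ a, b`
    obtain ⟨d, had, hbd, hd⟩ := exists_anisotropic_orthogonal hchar hn hdim ha hb hhyp.1
    have he : n (a + b + d) ≠ 0 := by
      rw [QuadraticMap.map_add n, QuadraticMap.map_add n a, polar_add_left, had, hbd, hhyp.1,
        add_zero, hhyp.2]
      simpa using hd
    have hae : polar n a (a + b + d) ≠ 0 := by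
      rw [polar_add_right, polar_add_right, polar_self_eq_two_mul, hhyp.1, had, add_zero, add_zero]
      exact mul_ne_zero hchar ha
    have hbe : polar n b (a + b + d) ≠ 0 := by
      rw [polar_add_right, polar_add_right, polar_self_eq_two_mul, polar_comm n b a, hhyp.1, hbd,
        add_zero, zero_add]
      exact mul_ne_zero hchar hb
    rw [linked a _ ha he (fun h => hae h.1), linked b _ hb he (fun h => hbe h.1)]
  · exact linked a b ha hb hhyp

lemma eq_top_of_anisotropic_mem (hchar : (2 : k) ≠ 0) {x₀ : V} (hx₀ : n x₀ ≠ 0)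
    {S : Submodule k V} (hS : ∀ a, n a ≠ 0 → a ∈ S) : S = ⊤ := by
  refine eq_top_iff.mpr fun a _ => ?_
  by_cases hadd : n (a + x₀) = 0
  · by_cases hsub : n (a - x₀) = 0
    · refine hS a fun ha => hx₀ ?_
      simpa [ha] using (polar_eq_zero_and_add_eq_zero hchar hadd hsub).2
    · simpa using S.add_mem (hS _ hsub) (hS _ hx₀)
  · simpa using S.sub_mem (hS _ hadd) (hS _ hx₀)

end Form

end QuadraticForm

def twistSubmodule {k V : Type*} [Field k] [AddCommGroup V] [Module k V]
    (T : V →ₗ[k] V) (μ : V →ₗ[k] V →ₗ[k] V) (c : k) : Submodule k V where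
  carrier := {a | ∀ x, T (μ a x) = c • μ a (T x)}
  add_mem' ha hb x := by simp only [map_add, LinearMap.add_apply, ha x, hb x, smul_add]
  zero_mem' x := by simp
  smul_mem' t a ha x := by simp only [map_smul, LinearMap.smul_apply, ha x, smul_comm t c]

section Twist

variable {k V : Type*} [Field k] [AddCommGroup V] [Module k V] {T : V →ₗ[k] V}
  {μ : V →ₗ[k] V →ₗ[k] V}

lemma eq_of_mem_twistSubmodule (hμ : Function.Injective μ) (hT : Function.Surjective T)
    {a : V} (ha : a ≠ 0) {c d : k} (hc : a ∈ twistSubmodule T μ c)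
    (hd : a ∈ twistSubmodule T μ d) : c = d := by
  by_contra hcd
  refine ha (hμ ?_)
  ext v
  obtain ⟨x, rfl⟩ := hT v
  have : (c - d) • μ a (T x) = 0 := by rw [sub_smul, ← hc x, ← hd x, sub_self]
  simpa using (smul_eq_zero.mp this).resolve_left (sub_ne_zero.mpr hcd)

lemma eq_of_add_mem_twistSubmodule (hμ : Function.Injective μ) (hT : Function.Surjective T)
    {a b : V} (ha : a ≠ 0) (hb : b ≠ 0) {c d e : k} (hc : a ∈ twistSubmodule T μ c)
    (hd : b ∈ twistSubmodule T μ d) (he : a + b ∈ twistSubmodule T μ e) : c = d := by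
  have hrel : (e - c) • a = (d - e) • b := by
    rw [← sub_eq_zero]
    refine hμ ?_
    ext v
    obtain ⟨x, rfl⟩ := hT v
    have := he x
    simp only [map_add, LinearMap.add_apply, hc x, hd x] at this
    simp only [map_sub, map_smul, LinearMap.sub_apply, LinearMap.smul_apply, map_zero,
      LinearMap.zero_apply, sub_smul]
    linear_combination (norm := module) -this
  by_cases hec : e = c
  · rw [hec, sub_self, zero_smul, eq_comm, smul_eq_zero, sub_eq_zero] at hrel
    exact (hrel.resolve_right hb).symm
  · have hab : a = ((e - c)⁻¹ * (d - e)) • b := by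
      rw [mul_smul, ← hrel, inv_smul_smul₀ (sub_ne_zero.mpr hec)]
    exact eq_of_mem_twistSubmodule hμ hT ha hc (hab ▸ Submodule.smul_mem _ _ hd)

end Twist

namespace QuadraticForm

variable {k V : Type*} [Field k] [AddCommGroup V] [Module k V] {n N : QuadraticForm k V}
  {μ : V →ₗ[k] V →ₗ[k] V} {T : V →ₗ[k] V}

lemma polar_mul_mul_left (hμ : ∀ x y, n (μ x y) = n x * n y) (a x y : V) :
    polar n (μ a x) (μ a y) = n a * polar n x y := by
  simp only [polar, ← map_add, hμ]
  ring

lemma polar_mul_mul_right (hμ : ∀ x y, n (μ x y) = n x * n y) (a b x : V) :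
    polar n (μ a x) (μ b x) = polar n a b * n x := by
  simp only [polar, ← LinearMap.add_apply, ← map_add, hμ]
  ring

lemma surjective_apply_of_anisotropic [FiniteDimensional k V] (hn : (polarBilin n).SeparatingLeft)
    (hμ : ∀ x y, n (μ x y) = n x * n y) {a : V} (ha : n a ≠ 0) : Function.Surjective (μ a) := by
  refine LinearMap.injective_iff_surjective.mp <| (injective_iff_map_eq_zero _).mpr fun x hx => ?_
  refine hn x fun y => ?_
  have := polar_mul_mul_left hμ a x y
  rw [hx, polar_zero_left] at this
  exact (mul_eq_zero.mp this.symm).resolve_left ha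

lemma injective_of_anisotropic (hn : (polarBilin n).SeparatingLeft)
    (hμ : ∀ x y, n (μ x y) = n x * n y) {x₀ : V} (hx₀ : n x₀ ≠ 0) : Function.Injective μ := by
  refine (injective_iff_map_eq_zero _).mpr fun w hw => hn w fun u => ?_
  have := polar_mul_mul_right hμ w u x₀
  rw [hw, LinearMap.zero_apply, polar_zero_left] at this
  exact (mul_eq_zero.mp this.symm).resolve_right hx₀

lemma mem_twistSubmodule_div [FiniteDimensional k V] (hn : (polarBilin n).SeparatingLeft)
    (hμn : ∀ x y, n (μ x y) = n x * n y) (hμN : ∀ x y, N (μ x y) = N x * N y)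
    (hT : ∀ x y, polar n (T x) y = polar N x y) {a : V} (ha : n a ≠ 0) :
    a ∈ twistSubmodule T μ (N a / n a) := by
  intro x
  refine sub_eq_zero.mp (hn _ fun z => ?_)
  obtain ⟨y, rfl⟩ := surjective_apply_of_anisotropic hn hμn ha z
  rw [polarBilin_apply_apply, polar_sub_left, polar_smul_left, hT, polar_mul_mul_left hμN, ← hT,
    polar_mul_mul_left hμn, smul_eq_mul]
  field_simp
  ring

lemma map_eq_mul_of_twistSubmodule_eq_top [Nontrivial V] (hN : (polarBilin N).SeparatingLeft)
    (hμn : ∀ x y, n (μ x y) = n x * n y) (hμN : ∀ x y, N (μ x y) = N x * N y)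
    (hT : ∀ x y, polar n (T x) y = polar N x y) {c : k} (htop : twistSubmodule T μ c = ⊤)
    (a : V) : N a = c * n a := by
  obtain ⟨x, hx⟩ := exists_ne (0 : V)
  obtain ⟨y, hxy⟩ : ∃ y, polar N x y ≠ 0 := by
    by_contra! h
    exact hx (hN x h)
  have hax : a ∈ twistSubmodule T μ c := htop ▸ Submodule.mem_top
  have key : N a * polar N x y = c * n a * polar N x y := by
    rw [← polar_mul_mul_left hμN, ← hT, hax x, polar_smul_left, polar_mul_mul_left hμn, hT,
      smul_eq_mul, mul_assoc]
  exact mul_right_cancel₀ hxy key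

lemma exists_surjective_polar_apply_eq [FiniteDimensional k V]
    (hn : (polarBilin n).SeparatingLeft) (hN : (polarBilin N).SeparatingLeft) :
    ∃ T : V →ₗ[k] V, Function.Surjective T ∧ ∀ x y, polar n (T x) y = polar N x y := by
  have hn' : (polarBilin n).Nondegenerate :=
    LinearMap.IsRefl.nondegenerate_iff_separatingLeft
      (fun x y hxy => by rwa [polarBilin_apply_apply, polar_comm] at hxy) |>.mpr hn
  set T := LinearMap.BilinForm.symmCompOfNondegenerate (polarBilin N) (polarBilin n) hn'
  have hT : ∀ x y, polar n (T x) y = polar N x y := fun x y =>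
    LinearMap.BilinForm.symmCompOfNondegenerate_left_apply _ hn' y x
  refine ⟨T, LinearMap.injective_iff_surjective.mp <| (injective_iff_map_eq_zero _).mpr
    fun x hx => hN x fun y => ?_, hT⟩
  rw [polarBilin_apply_apply, ← hT, hx, polar_zero_left]

theorem eq_of_map_mul [FiniteDimensional k V] (hchar : (2 : k) ≠ 0) (hdim : 2 < finrank k V)
    (hn : (polarBilin n).SeparatingLeft) (hN : (polarBilin N).SeparatingLeft)
    (hμn : ∀ x y, n (μ x y) = n x * n y) (hμN : ∀ x y, N (μ x y) = N x * N y) : N = n := by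
  have : Nontrivial V := Module.nontrivial_of_finrank_pos (R := k) (by omega)
  obtain ⟨x₀, hx₀⟩ := exists_anisotropic hn
  obtain ⟨T, hT_surj, hT⟩ := exists_surjective_polar_apply_eq hn hN
  have hμ_inj := injective_of_anisotropic hn hμn hx₀
  have hmem := fun a (ha : n a ≠ 0) => mem_twistSubmodule_div hn hμn hμN hT ha
  have hne : ∀ {a : V}, n a ≠ 0 → a ≠ 0 := fun ha h => ha (h ▸ map_zero n)
  set c := N x₀ / n x₀
  have hconst : ∀ a, n a ≠ 0 → N a / n a = c := fun a ha =>
    apply_eq_apply_of_anisotropic (f := fun a => N a / n a) hchar hn hdim (by simp)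
      (fun a b ha hb hab => eq_of_add_mem_twistSubmodule hμ_inj hT_surj (hne ha) (hne hb)
        (hmem a ha) (hmem b hb) (hmem _ hab)) ha hx₀
  have htop : twistSubmodule T μ c = ⊤ :=
    eq_top_of_anisotropic_mem hchar hx₀ fun a ha => hconst a ha ▸ hmem a ha
  have hNc := map_eq_mul_of_twistSubmodule_eq_top hN hμn hμN hT htop
  have hc0 : c ≠ 0 := fun hc => hN.ne_zero (by ext x y; simp [polar, hNc, hc])
  have hc1 : c = 1 := by
    have := hμN x₀ x₀
    rw [hNc, hNc, hμn] at this
    have : c * (c - 1) * (n x₀ * n x₀) = 0 := by linear_combination -this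
    simpa [hc0, hx₀, sub_eq_zero] using this
  ext a
  rw [hNc, hc1, one_mul]

end QuadraticForm

/-- If `h : C → D` is an isomorphism of eight-dimensional composition algebras
with the same form `n`, then `h ∈ O(n)`, and whenever `(j₁, j₂)` are triality
components of `j` with respect to `D`, the pair `(h⁻¹j₁h, h⁻¹j₂h)` consists of
triality components of `h⁻¹jh` with respect to `C`; consequently
`ρ_r^C([h⁻¹jh]) = [h⁻¹]ρ_r^D([j])[h]`. -/
theorem stmt14 {k V : Type*} [Field k] (hchar : (2 : k) ≠ 0)
    [AddCommGroup V] [Module k V] [FiniteDimensional k V]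
    (hdim : Module.finrank k V = 8)
    (n : QuadraticForm k V)
    (hnd : ∀ x : V, (∀ y : V, QuadraticMap.polar n x y = 0) → x = 0)
    (mulC mulD : V →ₗ[k] V →ₗ[k] V)
    (hcompC : ∀ x y : V, n (mulC x y) = n x * n y)
    (hcompD : ∀ x y : V, n (mulD x y) = n x * n y)
    (h : V ≃ₗ[k] V)
    (hhom : ∀ x y : V, h (mulC x y) = mulD (h x) (h y)) :
    (∀ x : V, n (h x) = n x) ∧
    (∀ j j₁ j₂ : V ≃ₗ[k] V,
      (∀ x y : V, j (mulD x y) = mulD (j₁ x) (j₂ y)) →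
      ∀ x y : V, h.symm (j (h (mulC x y))) =
        mulC (h.symm (j₁ (h x))) (h.symm (j₂ (h y)))) := by
  have hN : (polarBilin (n.comp (h : V →ₗ[k] V))).SeparatingLeft := fun x hx =>
    h.map_eq_zero_iff.mp <| hnd _ fun z => by simpa [polar] using hx (h.symm z)
  have hiso : n.comp (h : V →ₗ[k] V) = n :=
    QuadraticForm.eq_of_map_mul hchar (by omega) hnd hN hcompC (by simp [hhom, hcompD])
  refine ⟨fun x => DFunLike.congr_fun hiso x, fun j j₁ j₂ hj x y => ?_⟩
  rw [hhom, hj, ← h.symm_apply_apply (mulC _ _), hhom, h.apply_symm_apply, h.apply_symm_apply]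
end

section
/- Let H be an eight-dimensional Hurwitz algebra with norm n, unit e, and a, b ∈ H anisotropic (n(a), n(b) ≠ 0). Then the isotope H' = H_{R_a, L_b}, with multiplication x·y = (xa)(by), is a unital generalized composition algebra with unit e' = (ab)⁻¹ and multiplier λ = n(ab), i.e., n(x·y) = n(ab)·n(x)n(y) for all x, y. -/
/-!
Conjugation `x̄ = polar n x e • e - x` is an involutive anti-automorphism with
`x̄ (x y) = n(x) y = (y x) x̄`; all of this follows by nondegeneracy from the linearizations of
`n(xy) = n(x) n(y)`. Hence `(ab)⁻¹ = n(ab)⁻¹ b̄ ā`, and since `(b̄ ā) a = n(a) b̄` and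
`b (b̄ ā) = n(b) ā`, it is a two-sided unit of the isotope.
-/

open QuadraticMap

section Hurwitz

variable {k H : Type*} [Field k] [AddCommGroup H] [Module k H]

structure IsHurwitz (n : QuadraticForm k H) (mul : H →ₗ[k] H →ₗ[k] H) (e : H) : Prop where
  map_mul : ∀ x y : H, n (mul x y) = n x * n y
  one_mul : ∀ x : H, mul e x = x
  mul_one : ∀ x : H, mul x e = x
  map_one : n e = 1
  nondegenerate : ∀ x : H, (∀ y : H, polar n x y = 0) → x = 0

def hurwitzConj (n : QuadraticForm k H) (e x : H) : H := polar n x e • e - x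

theorem polar_hurwitzConj_left (n : QuadraticForm k H) (e x z : H) :
    polar n (hurwitzConj n e x) z = polar n x (hurwitzConj n e z) := by
  simp only [hurwitzConj, polar_sub_left, polar_sub_right, polar_smul_left, polar_smul_right,
    smul_eq_mul, polar_comm n e]
  ring

namespace IsHurwitz

variable {n : QuadraticForm k H} {mul : H →ₗ[k] H →ₗ[k] H} {e : H}

theorem ext_of_polar (h : IsHurwitz n mul e) {x y : H} (hxy : ∀ z, polar n x z = polar n y z) :
    x = y :=
  sub_eq_zero.mp <| h.nondegenerate _ fun z => by rw [polar_sub_left, hxy, sub_self]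

theorem polar_mul_mul_left (h : IsHurwitz n mul e) (x y z : H) :
    polar n (mul x y) (mul x z) = n x * polar n y z := by
  rw [polar, polar, ← map_add, h.map_mul, h.map_mul, h.map_mul]
  ring

theorem polar_mul_mul_right (h : IsHurwitz n mul e) (x y z : H) :
    polar n (mul x z) (mul y z) = polar n x y * n z := by
  rw [polar, polar, ← LinearMap.map_add₂, h.map_mul, h.map_mul, h.map_mul]
  ring

theorem polar_mul_mul_add_polar_mul_mul (h : IsHurwitz n mul e) (x y u v : H) :
    polar n (mul x y) (mul u v) + polar n (mul u y) (mul x v) = polar n x u * polar n y v := by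
  have hyv := h.polar_mul_mul_right x u (y + v)
  have hy := h.polar_mul_mul_right x u y
  have hv := h.polar_mul_mul_right x u v
  have hnorm : n (y + v) = n y + n v + polar n y v := by rw [polar]; ring
  rw [map_add, map_add, polar_add_left, polar_add_right, polar_add_right, hnorm] at hyv
  linear_combination hyv - hy - hv + polar_comm n (mul u y) (mul x v)

theorem conj_mul_eq (h : IsHurwitz n mul e) (x y : H) :
    mul (hurwitzConj n e x) y = polar n x e • y - mul x y := by
  rw [hurwitzConj, LinearMap.map_sub₂, LinearMap.map_smul₂, h.one_mul]

theorem mul_conj_eq (h : IsHurwitz n mul e) (x y : H) :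
    mul y (hurwitzConj n e x) = polar n x e • y - mul y x := by
  rw [hurwitzConj, map_sub, map_smul, h.mul_one]

theorem polar_mul_left (h : IsHurwitz n mul e) (x y z : H) :
    polar n (mul x y) z = polar n y (mul (hurwitzConj n e x) z) := by
  have hlin := h.polar_mul_mul_add_polar_mul_mul x y e z
  rw [h.one_mul, h.one_mul] at hlin
  rw [h.conj_mul_eq, polar_sub_right, polar_smul_right, smul_eq_mul]
  linear_combination hlin

theorem polar_mul_right (h : IsHurwitz n mul e) (x y z : H) :
    polar n (mul x y) z = polar n x (mul z (hurwitzConj n e y)) := by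
  have hlin := h.polar_mul_mul_add_polar_mul_mul x y z e
  rw [h.mul_one, h.mul_one] at hlin
  rw [h.mul_conj_eq, polar_sub_right, polar_smul_right, smul_eq_mul]
  linear_combination hlin + polar_comm n x (mul z y)

theorem conj_conj (h : IsHurwitz n mul e) (x : H) : hurwitzConj n e (hurwitzConj n e x) = x := by
  have hee : polar n e e = 2 := by rw [polar_self, h.map_one, nsmul_eq_mul]; norm_num
  have htr : polar n (hurwitzConj n e x) e = polar n x e := by
    rw [hurwitzConj, polar_sub_left, polar_smul_left, hee, smul_eq_mul]; ring
  rw [hurwitzConj, htr, hurwitzConj, sub_sub_cancel]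

theorem map_conj (h : IsHurwitz n mul e) (x : H) : n (hurwitzConj n e x) = n x := by
  have hsub : ∀ u v : H, n (u - v) = n u + n v - polar n u v := fun u v => by
    have hneg : polar n u (-v) = n (u + -v) - n u - n (-v) := rfl
    rw [polar_neg_right, QuadraticMap.map_neg, ← sub_eq_add_neg] at hneg
    linear_combination -hneg
  rw [hurwitzConj, hsub, QuadraticMap.map_smul, h.map_one, polar_smul_left, polar_comm n e,
    smul_eq_mul, smul_eq_mul]
  ring

theorem conj_mul_cancel_left (h : IsHurwitz n mul e) (x y : H) :
    mul (hurwitzConj n e x) (mul x y) = n x • y :=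
  h.ext_of_polar fun z => by
    rw [h.polar_mul_left, h.conj_conj, h.polar_mul_mul_left, polar_smul_left, smul_eq_mul]

theorem mul_conj_cancel_right (h : IsHurwitz n mul e) (x y : H) :
    mul (mul y x) (hurwitzConj n e x) = n x • y :=
  h.ext_of_polar fun z => by
    rw [h.polar_mul_right, h.conj_conj, h.polar_mul_mul_right, polar_smul_left, smul_eq_mul,
      mul_comm]

theorem conj_mul_self (h : IsHurwitz n mul e) (x : H) : mul (hurwitzConj n e x) x = n x • e := by
  simpa only [h.mul_one] using h.conj_mul_cancel_left x e

theorem mul_conj_self (h : IsHurwitz n mul e) (x : H) : mul x (hurwitzConj n e x) = n x • e := by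
  simpa only [h.one_mul] using h.mul_conj_cancel_right x e

theorem mul_conj_cancel_left (h : IsHurwitz n mul e) (x y : H) :
    mul x (mul (hurwitzConj n e x) y) = n x • y := by
  simpa only [h.conj_conj, h.map_conj] using h.conj_mul_cancel_left (hurwitzConj n e x) y

theorem conj_mul_cancel_right (h : IsHurwitz n mul e) (x y : H) :
    mul (mul y (hurwitzConj n e x)) x = n x • y := by
  simpa only [h.conj_conj, h.map_conj] using h.mul_conj_cancel_right (hurwitzConj n e x) y

theorem conj_mul (h : IsHurwitz n mul e) (x y : H) :
    hurwitzConj n e (mul x y) = mul (hurwitzConj n e y) (hurwitzConj n e x) :=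
  h.ext_of_polar fun z => by
    calc polar n (hurwitzConj n e (mul x y)) z
        = polar n (hurwitzConj n e z) (mul x y) := by
          rw [polar_hurwitzConj_left, polar_comm]
      _ = polar n (mul y z) (hurwitzConj n e x) := by
          rw [polar_comm, h.polar_mul_left, h.polar_mul_right]
      _ = polar n (mul (hurwitzConj n e y) (hurwitzConj n e x)) z := by
          rw [h.polar_mul_left (hurwitzConj n e y), h.conj_conj, polar_comm]

end IsHurwitz

end Hurwitz

theorem stmt17_general {k H : Type*} [Field k]
    [AddCommGroup H] [Module k H]
    (n : QuadraticForm k H)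
    (hnd : ∀ x : H, (∀ y : H, QuadraticMap.polar n x y = 0) → x = 0)
    (mul : H →ₗ[k] H →ₗ[k] H)
    (hcomp : ∀ x y : H, n (mul x y) = n x * n y)
    (e : H) (he : n e = 1)
    (hunitl : ∀ x : H, mul e x = x) (hunitr : ∀ x : H, mul x e = x)
    (a b : H) (ha : n a ≠ 0) (hb : n b ≠ 0) :
    ∃ e' : H,
      -- e' = (ab)⁻¹, the inverse of ab in H
      mul e' (mul a b) = e ∧ mul (mul a b) e' = e ∧
      -- e' is the unit of H' = H_{R_a, L_b}
      (∀ x : H, mul (mul e' a) (mul b x) = x) ∧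
      (∀ x : H, mul (mul x a) (mul b e') = x) ∧
      -- H' is a generalized composition algebra with multiplier n(ab)
      (∀ x y : H, n (mul (mul x a) (mul b y)) = n (mul a b) * (n x * n y)) := by
  have h : IsHurwitz n mul e := ⟨hcomp, hunitl, hunitr, he, hnd⟩
  have hab : n (mul a b) = n a * n b := hcomp a b
  have hab_ne : n a * n b ≠ 0 := mul_ne_zero ha hb
  refine ⟨(n a * n b)⁻¹ • hurwitzConj n e (mul a b), ?_, ?_, ?_, ?_, ?_⟩
  · rw [LinearMap.map_smul₂, h.conj_mul_self, hab, inv_smul_smul₀ hab_ne]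
  · rw [map_smul, h.mul_conj_self, hab, inv_smul_smul₀ hab_ne]
  · intro x
    rw [LinearMap.map_smul₂, h.conj_mul, h.conj_mul_cancel_right, LinearMap.map_smul₂,
      LinearMap.map_smul₂, h.conj_mul_cancel_left, smul_smul, smul_smul, mul_assoc,
      inv_mul_cancel₀ hab_ne, one_smul]
  · intro x
    rw [map_smul, h.conj_mul, h.mul_conj_cancel_left, map_smul, map_smul,
      h.mul_conj_cancel_right, smul_smul, smul_smul, mul_assoc, mul_comm (n b),
      inv_mul_cancel₀ hab_ne, one_smul]
  · intro x y
    rw [hcomp, hcomp, hcomp, hab]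
    ring

/-- Let `H` be an eight-dimensional Hurwitz algebra with unit `e` and let
`a, b ∈ H` be anisotropic. Then the isotope `H' = H_{R_a, L_b}`, with
multiplication `x·y = (xa)(by)`, is a unital generalized composition algebra
with unit `e' = (ab)⁻¹` and multiplier `n(ab)`. -/
theorem stmt17 {k H : Type*} [Field k] (hchar : (2 : k) ≠ 0)
    [AddCommGroup H] [Module k H] [FiniteDimensional k H]
    (hdim : Module.finrank k H = 8)
    (n : QuadraticForm k H)
    (hnd : ∀ x : H, (∀ y : H, QuadraticMap.polar n x y = 0) → x = 0)
    (mul : H →ₗ[k] H →ₗ[k] H)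
    (hcomp : ∀ x y : H, n (mul x y) = n x * n y)
    (e : H) (he : n e = 1)
    (hunitl : ∀ x : H, mul e x = x) (hunitr : ∀ x : H, mul x e = x)
    (a b : H) (ha : n a ≠ 0) (hb : n b ≠ 0) :
    ∃ e' : H,
      -- e' = (ab)⁻¹, the inverse of ab in H
      mul e' (mul a b) = e ∧ mul (mul a b) e' = e ∧
      -- e' is the unit of H' = H_{R_a, L_b}
      (∀ x : H, mul (mul e' a) (mul b x) = x) ∧
      (∀ x : H, mul (mul x a) (mul b e') = x) ∧
      -- H' is a generalized composition algebra with multiplier n(ab)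
      (∀ x y : H, n (mul (mul x a) (mul b y)) = n (mul a b) * (n x * n y)) :=
  stmt17_general n hnd mul hcomp e he hunitl hunitr a b ha hb
end

section
/- Let (C, n) be a finite-dimensional composition algebra over a field k of characteristic not two, and let a, b ∈ C be anisotropic (n(a) ≠ 0, n(b) ≠ 0). Then the left multiplication operator L_a is a proper similarity if and only if L_b is, and R_a is proper if and only if R_b is. Consequently the double sign (sgn(L_c), sgn(R_c)) is independent of the choice of anisotropic c ∈ C. -/
/-!
The matrix of `L_{a + X b}` over `k[X]` is a similarity of the polar form of `n` with multiplier
`q = n(a + X b) = n a + polar(a, b) X + n b X²`, so its determinant squares to `q ^ (2m)` and hence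
equals `± q ^ m` with one sign along the whole line through `a` and `b`. The constant and top
coefficients of that determinant are `det L_a` and `det L_b`, those of `q ^ m` are `n(a) ^ m` and
`n(b) ^ m`, and since `2 ≠ 0` the common sign decides both sides at once. Right multiplications
are the left multiplications of the opposite product `mul.flip`.
-/

open Polynomial
open scoped Matrix

namespace Polynomial

theorem coeff_zero_eq_pow_iff_coeff_eq_pow {R : Type*} [CommRing R] [NoZeroDivisors R]
    (h2 : (2 : R) ≠ 0) {p : R[X]} {α β γ : R} {m : ℕ}
    (hp : p ^ 2 = (C β * X ^ 2 + C γ * X + C α) ^ (m * 2)) (hα : α ≠ 0) (hβ : β ≠ 0) :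
    p.coeff 0 = α ^ m ↔ p.coeff (m * 2) = β ^ m := by
  have neg_ne_self {x : R} (hx : x ≠ 0) : -x ≠ x := by
    rw [Ne, neg_eq_iff_add_eq_zero, ← two_mul]
    exact mul_ne_zero h2 hx
  set q := C β * X ^ 2 + C γ * X + C α
  have hbottom : (q ^ m).coeff 0 = α ^ m := by simp [q, coeff_zero_eq_eval_zero]
  have htop : (q ^ m).coeff (m * 2) = β ^ m := by
    rw [coeff_pow_of_natDegree_le natDegree_quadratic_le]
    simp
  rw [pow_mul, sq_eq_sq_iff_eq_or_eq_neg] at hp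
  rcases hp with rfl | rfl
  · simp only [hbottom, htop]
  · simp only [coeff_neg, hbottom, htop]
    exact iff_of_false (neg_ne_self (pow_ne_zero _ hα)) (neg_ne_self (pow_ne_zero _ hβ))

end Polynomial

namespace Matrix

variable {n R : Type*} [Fintype n] [DecidableEq n]

theorem det_sq_eq_of_transpose_mul_mul_eq_smul [CommRing R] [NoZeroDivisors R]
    {M G : Matrix n n R} {μ : R} (h : Mᵀ * G * M = μ • G) (hG : G.det ≠ 0) :
    M.det ^ 2 = μ ^ Fintype.card n := by
  have := congrArg det h
  rw [det_mul, det_mul, det_transpose, det_smul] at this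
  exact mul_right_cancel₀ hG (by linear_combination this)

theorem transpose_mul_mul_smul_add [CommRing R] (t : R) (A B G : Matrix n n R) :
    (t • B + A)ᵀ * G * (t • B + A)
      = t ^ 2 • (Bᵀ * G * B) + t • (Aᵀ * G * B + Bᵀ * G * A) + Aᵀ * G * A := by
  simp only [transpose_add, transpose_smul, add_mul, mul_add, Matrix.smul_mul, Matrix.mul_smul,
    smul_add, smul_smul, sq]
  abel

theorem det_X_smul_add_sq [CommRing R] [IsDomain R] {A B G : Matrix n n R} {α β γ : R}
    (hA : Aᵀ * G * A = α • G) (hB : Bᵀ * G * B = β • G)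
    (hAB : Aᵀ * G * B + Bᵀ * G * A = γ • G) (hG : G.det ≠ 0) :
    det ((X : R[X]) • B.map C + A.map C) ^ 2
      = (C β * X ^ 2 + C γ * X + C α) ^ Fintype.card n := by
  have hmap {M : Matrix n n R} {r : R} (h : M = r • G) :
      M.map C = C r • G.map (C : R → R[X]) :=
    h ▸ map_smul' _ _ _ C.map_mul
  refine det_sq_eq_of_transpose_mul_mul_eq_smul (G := G.map C) ?_ ?_
  · rw [transpose_mul_mul_smul_add, ← transpose_map, ← transpose_map]
    simp only [← Matrix.map_mul]
    rw [← Matrix.map_add C (map_add C)]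
    rw [hmap hA, hmap hB, hmap hAB, smul_smul, smul_smul, ← add_smul, ← add_smul]
    congr 1
    ring
  · exact (C.map_det G).symm ▸ (map_ne_zero_iff _ C_injective).2 hG

end Matrix

namespace QuadraticMap

variable {R M : Type*} [CommRing R] [AddCommGroup M] [Module R M] {Q : QuadraticForm R M}
  {mul : M →ₗ[R] M →ₗ[R] M}

theorem polarBilin_comp_mul_self (hcomp : ∀ x y, Q (mul x y) = Q x * Q y) (x : M) :
    LinearMap.BilinForm.comp Q.polarBilin (mul x) (mul x) = Q x • Q.polarBilin := by
  ext y w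
  have hsum : Q (mul x y + mul x w) = Q x * Q (y + w) := by rw [← map_add, hcomp]
  simp only [LinearMap.BilinForm.comp_apply, LinearMap.smul_apply, polarBilin_apply_apply,
    polar, hsum, hcomp, smul_eq_mul]
  ring

theorem polarBilin_comp_mul_add_comp_mul (hcomp : ∀ x y, Q (mul x y) = Q x * Q y) (x z : M) :
    LinearMap.BilinForm.comp Q.polarBilin (mul x) (mul z)
        + LinearMap.BilinForm.comp Q.polarBilin (mul z) (mul x) = polar Q x z • Q.polarBilin := by
  ext y w
  have hxz := LinearMap.congr_fun₂ (polarBilin_comp_mul_self hcomp (x + z)) y w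
  have hx := LinearMap.congr_fun₂ (polarBilin_comp_mul_self hcomp x) y w
  have hz := LinearMap.congr_fun₂ (polarBilin_comp_mul_self hcomp z) y w
  simp only [LinearMap.BilinForm.comp_apply, LinearMap.smul_apply, LinearMap.add_apply,
    map_add, polarBilin_apply_apply, smul_eq_mul] at hxz hx hz ⊢
  rw [show Q (x + z) = polar Q x z + Q x + Q z by rw [polar]; ring] at hxz
  linear_combination hxz - hx - hz

end QuadraticMap

theorem det_mul_eq_pow_half_finrank_iff {k C : Type*} [Field k] (hchar : (2 : k) ≠ 0)
    [AddCommGroup C] [Module k C] [FiniteDimensional k C]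
    (heven : Even (Module.finrank k C)) {n : QuadraticForm k C}
    (hnd : ∀ x : C, (∀ y : C, QuadraticMap.polar n x y = 0) → x = 0)
    {mul : C →ₗ[k] C →ₗ[k] C} (hcomp : ∀ x y : C, n (mul x y) = n x * n y)
    {a b : C} (ha : n a ≠ 0) (hb : n b ≠ 0) :
    LinearMap.det (mul a) = n a ^ (Module.finrank k C / 2) ↔
      LinearMap.det (mul b) = n b ^ (Module.finrank k C / 2) := by
  let e := Module.finBasis k C
  let G := LinearMap.BilinForm.toMatrix e n.polarBilin
  have hG : G.det ≠ 0 := by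
    refine (LinearMap.BilinForm.nondegenerate_iff_det_ne_zero e).1
      ⟨fun x hx => hnd x hx, fun y hy => hnd y fun x => ?_⟩
    exact (QuadraticMap.polar_comm n y x).trans (hy x)
  have htoMatrix (x y : C) :
      (LinearMap.toMatrix e e (mul x))ᵀ * G * LinearMap.toMatrix e e (mul y)
        = LinearMap.BilinForm.toMatrix e (LinearMap.BilinForm.comp n.polarBilin (mul x) (mul y)) :=
    (LinearMap.BilinForm.toMatrix_comp e e _ _ _).symm
  have hsq := Matrix.det_X_smul_add_sq
    ((htoMatrix a a).trans <| by rw [QuadraticMap.polarBilin_comp_mul_self hcomp, map_smul])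
    ((htoMatrix b b).trans <| by rw [QuadraticMap.polarBilin_comp_mul_self hcomp, map_smul])
    (by rw [htoMatrix, htoMatrix, ← map_add,
      QuadraticMap.polarBilin_comp_mul_add_comp_mul hcomp, map_smul]) hG
  have hd : Fintype.card (Fin (Module.finrank k C)) = Module.finrank k C / 2 * 2 := by
    rw [Fintype.card_fin, Nat.div_mul_cancel heven.two_dvd]
  rw [hd] at hsq
  rw [← LinearMap.det_toMatrix e, ← LinearMap.det_toMatrix e,
    ← coeff_det_X_add_C_zero (LinearMap.toMatrix e e (mul b)),
    ← coeff_det_X_add_C_card _ (LinearMap.toMatrix e e (mul a)), hd]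
  exact coeff_zero_eq_pow_iff_coeff_eq_pow hchar hsq ha hb

/-- In a finite-dimensional (even-dimensional) composition algebra `(C, n)`,
for anisotropic `a, b`, the similarity `L_a` is proper iff `L_b` is, and `R_a`
is proper iff `R_b` is; hence the double sign is well defined. (A similarity
with multiplier `μ` of a `2m`-dimensional form is proper when its determinant
equals `μ^m`.) -/
theorem stmt18 {k C : Type*} [Field k] (hchar : (2 : k) ≠ 0)
    [AddCommGroup C] [Module k C] [FiniteDimensional k C]
    (heven : Even (Module.finrank k C))
    (n : QuadraticForm k C)
    (hnd : ∀ x : C, (∀ y : C, QuadraticMap.polar n x y = 0) → x = 0)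
    (mul : C →ₗ[k] C →ₗ[k] C)
    (hcomp : ∀ x y : C, n (mul x y) = n x * n y)
    (a b : C) (ha : n a ≠ 0) (hb : n b ≠ 0) :
    ((LinearMap.det (mul a) = n a ^ (Module.finrank k C / 2)) ↔
      (LinearMap.det (mul b) = n b ^ (Module.finrank k C / 2))) ∧
    ((LinearMap.det (mul.flip a) = n a ^ (Module.finrank k C / 2)) ↔
      (LinearMap.det (mul.flip b) = n b ^ (Module.finrank k C / 2))) :=
  ⟨det_mul_eq_pow_half_finrank_iff hchar heven hnd hcomp ha hb,
    det_mul_eq_pow_half_finrank_iff hchar heven hnd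
      (fun x y => (hcomp y x).trans (mul_comm _ _)) ha hb⟩
end
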